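/- Let n ≥ 3 and i, j ∈ ℤ/nℤ. Then for every ℓ ∈ ℤ, the 4-tuple of reflections (s_i, s_i, s_j, s_j) in D_n is Hurwitz equivalent to (s_{i+ℓ(j−i)}, s_{i+ℓ(j−i)}, s_{j+ℓ(j−i)}, s_{j+ℓ(j−i)}); more precisely, (s_i, s_i, s_j, s_j)·(σ_2^{-1}σ_1^{-1}σ_3σ_2)^ℓ equals that tuple. -/

import Mathlib

/-- One elementary braid (Hurwitz) move on a tuple of elements of a group `G`,
encoded as a list: `σᵢ` replaces the adjacent pair `(a, b)` occurring at some
position by `(a * b * a⁻¹, a)`. -/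
inductive BraidStep {G : Type*} [Group G] : List G → List G → Prop
  | head (a b : G) (t : List G) : BraidStep (a :: b :: t) (a * b * a⁻¹ :: a :: t)
  | tail (a : G) {l₁ l₂ : List G} : BraidStep l₁ l₂ → BraidStep (a :: l₁) (a :: l₂)

/-- Hurwitz (braid) equivalence: the equivalence relation generated by
elementary braid moves (so finitely many moves and their inverses). -/
def HurwitzEquiv {G : Type*} [Group G] : List G → List G → Prop :=
  Relation.EqvGen BraidStep

/-- Braid-automorphism equivalence: `v` and `w` differ by a braid move sequence
together with the diagonal action of a group automorphism. -/
def BAEquiv {G : Type*} [Group G] (v w : List G) : Prop :=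
  ∃ φ : G ≃* G, HurwitzEquiv (v.map ⇑φ) w

/-- A `G`-Hurwitz vector (genus 0): all entries nontrivial, the entries
generate `G`, and the product of the entries is `1`. -/
def IsHurwitzVector {G : Type*} [Group G] (v : List G) : Prop :=
  (∀ c ∈ v, c ≠ 1) ∧ Subgroup.closure {g | g ∈ v} = ⊤ ∧ v.prod = 1

/-- The reflection `s i = x^i * y` of the dihedral group `D_n`,
where `x = DihedralGroup.r 1` and `y = DihedralGroup.sr 0`. -/
def sD {n : ℕ} (i : ZMod n) : DihedralGroup n :=
  DihedralGroup.r i * DihedralGroup.sr 0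

/-- Being a reflection in the dihedral group. -/
def IsReflection {n : ℕ} (g : DihedralGroup n) : Prop :=
  ∃ i : ZMod n, g = DihedralGroup.sr i

/-- The elementary braid `σ₁` acting on quadruples. -/
def sigma1 {G : Type*} [Group G] : Equiv.Perm (G × G × G × G) where
  toFun p := (p.1 * p.2.1 * p.1⁻¹, p.1, p.2.2)
  invFun p := (p.2.1, p.2.1⁻¹ * p.1 * p.2.1, p.2.2)
  left_inv := by rintro ⟨a, b, c, d⟩; simp [mul_assoc]
  right_inv := by rintro ⟨a, b, c, d⟩; simp [mul_assoc]

/-- The elementary braid `σ₂` acting on quadruples. -/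
def sigma2 {G : Type*} [Group G] : Equiv.Perm (G × G × G × G) where
  toFun p := (p.1, p.2.1 * p.2.2.1 * p.2.1⁻¹, p.2.1, p.2.2.2)
  invFun p := (p.1, p.2.2.1, p.2.2.1⁻¹ * p.2.1 * p.2.2.1, p.2.2.2)
  left_inv := by rintro ⟨a, b, c, d⟩; simp [mul_assoc]
  right_inv := by rintro ⟨a, b, c, d⟩; simp [mul_assoc]

/-- The elementary braid `σ₃` acting on quadruples. -/
def sigma3 {G : Type*} [Group G] : Equiv.Perm (G × G × G × G) where
  toFun p := (p.1, p.2.1, p.2.2.1 * p.2.2.2 * p.2.2.1⁻¹, p.2.2.1)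
  invFun p := (p.1, p.2.1, p.2.2.2, p.2.2.2⁻¹ * p.2.2.1 * p.2.2.2)
  left_inv := by rintro ⟨a, b, c, d⟩; simp [mul_assoc]
  right_inv := by rintro ⟨a, b, c, d⟩; simp [mul_assoc]

/-! An involution `a` has `(b⁻¹ a b)² = 1`, so the braid `σ₂ σ₃ σ₁⁻¹ σ₂⁻¹` slides `(a, a, b, b)` to
`(b, b, b⁻¹ a b, b⁻¹ a b)`. For reflections of `D_n`, `b⁻¹ a b = s_{2j-i}` when `a = s_i`, `b = s_j`,
so each application translates both indices by `j - i`. The braid moves realize the Hurwitz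
equivalence because the permutations moving every quadruple within its Hurwitz class form a
subgroup. -/

section Hurwitz

variable {G : Type*} [Group G]

def quadList (p : G × G × G × G) : List G := [p.1, p.2.1, p.2.2.1, p.2.2.2]

variable (G) in
def hurwitzClassPreserving : Subgroup (Equiv.Perm (G × G × G × G)) where
  carrier := {g | ∀ p, HurwitzEquiv (quadList p) (quadList (g p))}
  one_mem' _ := .refl _
  mul_mem' hg hh p := .trans _ _ _ (hh p) (hg _)
  inv_mem' {g} hg p := by
    have h := (hg (g⁻¹ p)).symm
    rw [Equiv.Perm.inv_def, Equiv.apply_symm_apply] at h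
    exact h

lemma sigma1_mem_hurwitzClassPreserving : sigma1 ∈ hurwitzClassPreserving G :=
  fun _ => .rel _ _ (.head _ _ _)

lemma sigma2_mem_hurwitzClassPreserving : sigma2 ∈ hurwitzClassPreserving G :=
  fun _ => .rel _ _ (.tail _ (.head _ _ _))

lemma sigma3_mem_hurwitzClassPreserving : sigma3 ∈ hurwitzClassPreserving G :=
  fun _ => .rel _ _ (.tail _ (.tail _ (.head _ _ _)))

lemma sigma_conj_mem_hurwitzClassPreserving :
    sigma2 * sigma3 * sigma1⁻¹ * sigma2⁻¹ ∈ hurwitzClassPreserving G :=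
  mul_mem (mul_mem (mul_mem sigma2_mem_hurwitzClassPreserving sigma3_mem_hurwitzClassPreserving)
    (inv_mem sigma1_mem_hurwitzClassPreserving)) (inv_mem sigma2_mem_hurwitzClassPreserving)

lemma sigma_conj_apply_of_mul_self {a : G} (ha : a * a = 1) (b : G) :
    (sigma2 * sigma3 * sigma1⁻¹ * sigma2⁻¹ : Equiv.Perm (G × G × G × G)) (a, a, b, b) =
      (b, b, b⁻¹ * a * b, b⁻¹ * a * b) := by
  simp only [Equiv.Perm.mul_apply, Equiv.Perm.inv_def, sigma1, sigma2, sigma3,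
    Equiv.coe_fn_mk, Equiv.coe_fn_symm_mk]
  have hmiddle : b⁻¹ * a * b * (b⁻¹ * a * b * b * (b⁻¹ * a * b)⁻¹) * (b⁻¹ * a * b)⁻¹ = b := by
    rw [show b⁻¹ * a * b * (b⁻¹ * a * b * b * (b⁻¹ * a * b)⁻¹) * (b⁻¹ * a * b)⁻¹ =
      b⁻¹ * (a * a) * b * b * (b⁻¹ * (a * a) * b)⁻¹ by group, ha]
    group
  exact Prod.ext rfl (Prod.ext hmiddle rfl)

end Hurwitz

lemma Equiv.Perm.zpow_apply_of_apply_eq_succ {α : Type*} {f : Equiv.Perm α} {u : ℤ → α}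
    (h : ∀ k, f (u k) = u (k + 1)) (ℓ : ℤ) : (f ^ ℓ) (u 0) = u ℓ := by
  induction ℓ using Int.induction_on with
  | zero => rfl
  | succ k ih => rw [add_comm, zpow_add, zpow_one, Equiv.Perm.mul_apply, ih, h, add_comm]
  | pred k ih =>
    rw [sub_eq_neg_add, zpow_add, zpow_neg_one, Equiv.Perm.mul_apply, ih,
      Equiv.Perm.inv_eq_iff_eq, h, neg_add_cancel_comm]

section Dihedral

open DihedralGroup

variable {n : ℕ}

lemma sD_eq_sr (a : ZMod n) : sD a = sr (-a) := by
  simp [sD, r_mul_sr]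

lemma sD_mul_self (a : ZMod n) : sD a * sD a = 1 := by
  rw [sD_eq_sr, sr_mul_self]

lemma sD_inv_mul_sD_mul_sD (a b : ZMod n) : (sD b)⁻¹ * sD a * sD b = sD (2 * b - a) := by
  simp only [sD_eq_sr, inv_sr, sr_mul_sr, r_mul_sr]
  ring_nf

end Dihedral

theorem pair_translation_general (n : ℕ) (i j : ZMod n) (ℓ : ℤ) :
    HurwitzEquiv [sD i, sD i, sD j, sD j]
      [sD (i + (ℓ : ZMod n) * (j - i)), sD (i + (ℓ : ZMod n) * (j - i)),
       sD (j + (ℓ : ZMod n) * (j - i)), sD (j + (ℓ : ZMod n) * (j - i))] ∧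
    ((sigma2 * sigma3 * sigma1⁻¹ * sigma2⁻¹ :
        Equiv.Perm (DihedralGroup n × DihedralGroup n × DihedralGroup n × DihedralGroup n)) ^ ℓ)
        (sD i, sD i, sD j, sD j) =
      (sD (i + (ℓ : ZMod n) * (j - i)), sD (i + (ℓ : ZMod n) * (j - i)),
       sD (j + (ℓ : ZMod n) * (j - i)), sD (j + (ℓ : ZMod n) * (j - i))) := by
  have htranslate := Equiv.Perm.zpow_apply_of_apply_eq_succ
    (f := sigma2 * sigma3 * sigma1⁻¹ * sigma2⁻¹)
    (u := fun k : ℤ => (sD (i + (k : ZMod n) * (j - i)), sD (i + (k : ZMod n) * (j - i)),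
      sD (j + (k : ZMod n) * (j - i)), sD (j + (k : ZMod n) * (j - i))))
    (fun k => by
      rw [sigma_conj_apply_of_mul_self (sD_mul_self _), sD_inv_mul_sD_mul_sD]
      push_cast
      ring_nf) ℓ
  simp only [Int.cast_zero, zero_mul, add_zero] at htranslate
  refine ⟨?_, htranslate⟩
  simpa [quadList, htranslate] using
    zpow_mem sigma_conj_mem_hurwitzClassPreserving ℓ (sD i, sD i, sD j, sD j)

/-- for every `ℓ ∈ ℤ`, `(s_i, s_i, s_j, s_j)` is Hurwitz equivalent to
`(s_{i+ℓ(j-i)}, s_{i+ℓ(j-i)}, s_{j+ℓ(j-i)}, s_{j+ℓ(j-i)})`; more precisely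
`(s_i, s_i, s_j, s_j)·(σ₂⁻¹σ₁⁻¹σ₃σ₂)^ℓ` equals that tuple (the braid word acts on the
right, i.e. `σ₂⁻¹` is applied first). -/
theorem pair_translation (n : ℕ) (hn : 3 ≤ n) (i j : ZMod n) (ℓ : ℤ) :
    HurwitzEquiv [sD i, sD i, sD j, sD j]
      [sD (i + (ℓ : ZMod n) * (j - i)), sD (i + (ℓ : ZMod n) * (j - i)),
       sD (j + (ℓ : ZMod n) * (j - i)), sD (j + (ℓ : ZMod n) * (j - i))] ∧
    ((sigma2 * sigma3 * sigma1⁻¹ * sigma2⁻¹ :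
        Equiv.Perm (DihedralGroup n × DihedralGroup n × DihedralGroup n × DihedralGroup n)) ^ ℓ)
        (sD i, sD i, sD j, sD j) =
      (sD (i + (ℓ : ZMod n) * (j - i)), sD (i + (ℓ : ZMod n) * (j - i)),
       sD (j + (ℓ : ZMod n) * (j - i)), sD (j + (ℓ : ZMod n) * (j - i))) :=
  pair_translation_general n i j ℓ
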